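/- arXiv:1911.00608 — 4 statements merged into one kernel-verified Lean document; each statement's English description precedes it below -/
import Mathlib

section
/- Suppose (γ, ρ) is a symmetry pair (so γ(ξ(x₀,p,t)) = ξ(γ(x₀), ρ(p), t) for all x₀, p, t). If {(Xᵢ, [τᵢ₋₁, τᵢ])}ᵢ₌₁ʲ is a (K, p, [t₁,t₂])-reachtube, meaning Reach(K, p, [τᵢ₋₁, τᵢ]) ⊆ Xᵢ for each i, then for every i, Reach(γ(K), ρ(p), [τᵢ₋₁, τᵢ]) = γ(Reach(K, p, [τᵢ₋₁, τᵢ])) ⊆ γ(Xᵢ). In particular, {(γ(Xᵢ), [τᵢ₋₁, τᵢ])}ᵢ₌₁ʲ is a (γ(K), ρ(p), [t₁,t₂])-reachtube. -/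
/-- Reachable states over a time interval `[a, b]` of the flow `ξ` with parameter `p`. -/
def Reach {n : ℕ} {P : Type*} (ξ : (Fin n → ℝ) → P → ℝ → (Fin n → ℝ))
    (K : Set (Fin n → ℝ)) (p : P) (a b : ℝ) : Set (Fin n → ℝ) :=
  {x | ∃ x₀ ∈ K, ∃ t ∈ Set.Icc a b, x = ξ x₀ p t}

/-- If `(γ, ρ)` is a symmetry pair and `{(Xᵢ, [τᵢ₋₁, τᵢ])}ᵢ` is a
`(K, p, [t₁,t₂])`-reachtube, then for each `i`,
`Reach (γ '' K) (ρ p) [τᵢ₋₁,τᵢ] = γ '' Reach K p [τᵢ₋₁,τᵢ] ⊆ γ '' Xᵢ`; in particular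
`{(γ '' Xᵢ, [τᵢ₋₁, τᵢ])}ᵢ` is a `(γ '' K, ρ p, [t₁,t₂])`-reachtube. -/
theorem stmt_4 {n : ℕ} {P : Type*}
    (ξ : (Fin n → ℝ) → P → ℝ → (Fin n → ℝ))
    (γ : (Fin n → ℝ) → (Fin n → ℝ)) (ρ : P → P)
    (hsym : ∀ (x₀ : Fin n → ℝ) (p : P) (t : ℝ), γ (ξ x₀ p t) = ξ (γ x₀) (ρ p) t)
    (K : Set (Fin n → ℝ)) (p : P) (t₁ t₂ : ℝ)
    (j : ℕ) (X : ℕ → Set (Fin n → ℝ)) (τ : ℕ → ℝ)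
    (hτ0 : τ 0 = t₁) (hτj : τ j = t₂) (hmono : ∀ i < j, τ i < τ (i + 1))
    (htube : ∀ i < j, Reach ξ K p (τ i) (τ (i + 1)) ⊆ X i) :
    ∀ i < j,
      Reach ξ (γ '' K) (ρ p) (τ i) (τ (i + 1)) = γ '' Reach ξ K p (τ i) (τ (i + 1)) ∧
      Reach ξ (γ '' K) (ρ p) (τ i) (τ (i + 1)) ⊆ γ '' X i := by
  intro i hi
  have heq : Reach ξ (γ '' K) (ρ p) (τ i) (τ (i + 1)) = γ '' Reach ξ K p (τ i) (τ (i + 1)) := by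
    ext x
    constructor
    · rintro ⟨_, ⟨x₀, hx₀, rfl⟩, t, ht, rfl⟩
      exact ⟨ξ x₀ p t, ⟨x₀, hx₀, t, ht, rfl⟩, (hsym x₀ p t)⟩
    · rintro ⟨_, ⟨x₀, hx₀, t, ht, rfl⟩, rfl⟩
      exact ⟨γ x₀, ⟨x₀, hx₀, rfl⟩, t, ht, hsym x₀ p t⟩
  exact ⟨heq, heq ▸ Set.image_mono (f := γ) (htube i hi)⟩
end

section
/- Suppose (γ, ρ) is a symmetry pair of the system. Let {(Xᵢ, [τᵢ₋₁,τᵢ])}ᵢ₌₁ʲ be a (K, p, [t₁,t₂])-reachtube and {(Xᵢ', [τᵢ₋₁,τᵢ])}ᵢ₌₁ʲ be a time-aligned exact-reachset sequence for (K', p'), i.e., Xᵢ' = Reach(K', p', [τᵢ₋₁,τᵢ]). If K' ⊆ γ(K) and p' = ρ(p), then for every i ∈ [j], Xᵢ' ⊆ γ(Xᵢ). -/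
section

variable {n : ℕ} {P : Type*} {ξ : (Fin n → ℝ) → P → ℝ → (Fin n → ℝ)}

theorem Reach_mono {K K' : Set (Fin n → ℝ)} (hK : K ⊆ K') (p : P) (a b : ℝ) :
    Reach ξ K p a b ⊆ Reach ξ K' p a b := by
  rintro x ⟨x₀, hx₀, t, ht, rfl⟩
  exact ⟨x₀, hK hx₀, t, ht, rfl⟩

theorem image_Reach_of_symmetry {γ : (Fin n → ℝ) → (Fin n → ℝ)} {ρ : P → P}
    (hsym : ∀ x₀ p t, γ (ξ x₀ p t) = ξ (γ x₀) (ρ p) t) (K : Set (Fin n → ℝ)) (p : P)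
    (a b : ℝ) : γ '' Reach ξ K p a b = Reach ξ (γ '' K) (ρ p) a b := by
  ext x
  constructor
  · rintro ⟨_, ⟨x₀, hx₀, t, ht, rfl⟩, rfl⟩
    exact ⟨γ x₀, Set.mem_image_of_mem γ hx₀, t, ht, hsym x₀ p t⟩
  · rintro ⟨_, ⟨x₀, hx₀, rfl⟩, t, ht, rfl⟩
    exact ⟨ξ x₀ p t, ⟨x₀, hx₀, t, ht, rfl⟩, hsym x₀ p t⟩

end

theorem stmt_5_general {n : ℕ} {P : Type*}
    (ξ : (Fin n → ℝ) → P → ℝ → (Fin n → ℝ))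
    (γ : (Fin n → ℝ) → (Fin n → ℝ)) (ρ : P → P)
    (hsym : ∀ (x₀ : Fin n → ℝ) (p : P) (t : ℝ), γ (ξ x₀ p t) = ξ (γ x₀) (ρ p) t)
    (K K' : Set (Fin n → ℝ)) (p p' : P)
    (j : ℕ) (X X' : ℕ → Set (Fin n → ℝ)) (τ : ℕ → ℝ)
    (htube : ∀ i < j, Reach ξ K p (τ i) (τ (i + 1)) ⊆ X i)
    (htube' : ∀ i < j, X' i = Reach ξ K' p' (τ i) (τ (i + 1)))
    (hK : K' ⊆ γ '' K) (hp : p' = ρ p) :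
    ∀ i < j, X' i ⊆ γ '' X i := by
  intro i hi
  subst hp
  calc X' i = Reach ξ K' (ρ p) (τ i) (τ (i + 1)) := htube' i hi
    _ ⊆ Reach ξ (γ '' K) (ρ p) (τ i) (τ (i + 1)) := Reach_mono hK _ _ _
    _ = γ '' Reach ξ K p (τ i) (τ (i + 1)) := (image_Reach_of_symmetry hsym K p _ _).symm
    _ ⊆ γ '' X i := Set.image_mono (htube i hi)

/-- If `(γ, ρ)` is a symmetry pair, `{(Xᵢ,[τᵢ₋₁,τᵢ])}ᵢ` is a
`(K,p,[t₁,t₂])`-reachtube, `Xᵢ' = Reach K' p' [τᵢ₋₁,τᵢ]` is a time-aligned exact-reachset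
sequence, `K' ⊆ γ(K)` and `p' = ρ p`, then `Xᵢ' ⊆ γ(Xᵢ)` for every `i`. -/
theorem stmt_5 {n : ℕ} {P : Type*}
    (ξ : (Fin n → ℝ) → P → ℝ → (Fin n → ℝ))
    (γ : (Fin n → ℝ) → (Fin n → ℝ)) (ρ : P → P)
    (hsym : ∀ (x₀ : Fin n → ℝ) (p : P) (t : ℝ), γ (ξ x₀ p t) = ξ (γ x₀) (ρ p) t)
    (K K' : Set (Fin n → ℝ)) (p p' : P) (t₁ t₂ : ℝ)
    (j : ℕ) (X X' : ℕ → Set (Fin n → ℝ)) (τ : ℕ → ℝ)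
    (hτ0 : τ 0 = t₁) (hτj : τ j = t₂) (hmono : ∀ i < j, τ i < τ (i + 1))
    (htube : ∀ i < j, Reach ξ K p (τ i) (τ (i + 1)) ⊆ X i)
    (htube' : ∀ i < j, X' i = Reach ξ K' p' (τ i) (τ (i + 1)))
    (hK : K' ⊆ γ '' K) (hp : p' = ρ p) :
    ∀ i < j, X' i ⊆ γ '' X i :=
  stmt_5_general ξ γ ρ hsym K K' p p' j X X' τ htube htube' hK hp
end

section
/- Under the virtual-system assumption that each γ_p is invertible and γ_p(ξ(x₀,p,t)) = ξ(γ_p(x₀), p_v, t) for all x₀, t: if {(Xᵢ,[τᵢ₋₁,τᵢ])}ᵢ₌₁ʲ is a (K_v, p_v, [t_b,t_e])-reachtube of the virtual system, then {(γ_p⁻¹(Xᵢ),[τᵢ₋₁,τᵢ])}ᵢ₌₁ʲ is a (γ_p⁻¹(K_v), p, [t_b,t_e])-reachtube of the real system, i.e., Reach(γ_p⁻¹(K_v), p, [τᵢ₋₁,τᵢ]) ⊆ γ_p⁻¹(Xᵢ) for each i. -/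
section Conjugacy

variable {n : ℕ} {P : Type*} {ξ : (Fin n → ℝ) → P → ℝ → (Fin n → ℝ)}
  {e : (Fin n → ℝ) ≃ (Fin n → ℝ)} {p q : P}

theorem image_reach_of_conj (he : ∀ x₀ t, e (ξ x₀ p t) = ξ (e x₀) q t)
    (K : Set (Fin n → ℝ)) (a b : ℝ) :
    e '' Reach ξ K p a b = Reach ξ (e '' K) q a b := by
  ext x
  constructor
  · rintro ⟨_, ⟨x₀, hx₀, t, ht, rfl⟩, rfl⟩
    exact ⟨e x₀, Set.mem_image_of_mem e hx₀, t, ht, he x₀ t⟩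
  · rintro ⟨_, ⟨x₀, hx₀, rfl⟩, t, ht, rfl⟩
    exact ⟨ξ x₀ p t, ⟨x₀, hx₀, t, ht, rfl⟩, he x₀ t⟩

theorem reach_symm_image_of_conj (he : ∀ x₀ t, e (ξ x₀ p t) = ξ (e x₀) q t)
    (K : Set (Fin n → ℝ)) (a b : ℝ) :
    Reach ξ (e.symm '' K) p a b = e.symm '' Reach ξ K q a b := by
  rw [← e.symm_image_image (Reach ξ (e.symm '' K) p a b), image_reach_of_conj he,
    e.image_symm_image]

end Conjugacy

theorem stmt_7_general {n : ℕ} {P : Type*}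
    (ξ : (Fin n → ℝ) → P → ℝ → (Fin n → ℝ))
    (p_v : P)
    (γ : P → (Fin n → ℝ) ≃ (Fin n → ℝ))
    (hsym : ∀ (p : P) (x₀ : Fin n → ℝ) (t : ℝ), γ p (ξ x₀ p t) = ξ (γ p x₀) p_v t)
    (K_v : Set (Fin n → ℝ))
    (j : ℕ) (X : ℕ → Set (Fin n → ℝ)) (τ : ℕ → ℝ)
    (htube : ∀ i < j, Reach ξ K_v p_v (τ i) (τ (i + 1)) ⊆ X i) :
    ∀ (p : P), ∀ i < j,
      Reach ξ ((γ p).symm '' K_v) p (τ i) (τ (i + 1)) ⊆ (γ p).symm '' X i := by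
  intro p i hi
  rw [reach_symm_image_of_conj (hsym p)]
  exact Set.image_mono (htube i hi)

/-- Under the virtual-system assumption (each `γ_p` invertible with
`γ_p (ξ x₀ p t) = ξ (γ_p x₀) p_v t`), if `{(Xᵢ,[τᵢ₋₁,τᵢ])}ᵢ` is a
`(K_v, p_v, [t_b,t_e])`-reachtube of the virtual system, then
`{(γ_p⁻¹(Xᵢ),[τᵢ₋₁,τᵢ])}ᵢ` is a `(γ_p⁻¹(K_v), p, [t_b,t_e])`-reachtube of the real system. -/
theorem stmt_7 {n : ℕ} {P : Type*}
    (ξ : (Fin n → ℝ) → P → ℝ → (Fin n → ℝ))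
    (p_v : P)
    (γ : P → (Fin n → ℝ) ≃ (Fin n → ℝ))
    (hsym : ∀ (p : P) (x₀ : Fin n → ℝ) (t : ℝ), γ p (ξ x₀ p t) = ξ (γ p x₀) p_v t)
    (K_v : Set (Fin n → ℝ)) (t_b t_e : ℝ)
    (j : ℕ) (X : ℕ → Set (Fin n → ℝ)) (τ : ℕ → ℝ)
    (hτ0 : τ 0 = t_b) (hτj : τ j = t_e) (hmono : ∀ i < j, τ i < τ (i + 1))
    (htube : ∀ i < j, Reach ξ K_v p_v (τ i) (τ (i + 1)) ⊆ X i) :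
    ∀ (p : P), ∀ i < j,
      Reach ξ ((γ p).symm '' K_v) p (τ i) (τ (i + 1)) ⊆ (γ p).symm '' X i :=
  stmt_7_general ξ p_v γ hsym K_v j X τ htube
end

section
/- Let rtube₁ = {(Xᵢ, [τᵢ₋₁, τᵢ])}ᵢ₌₁ʲ be a (K₁, p, [0, T₁])-reachtube and rtube₂ = {(Yᵢ, [σᵢ₋₁, σᵢ])}ᵢ₌₁ᵏ be a (K₂, p, [0, T₂])-reachtube of the same time-invariant system, where K₂ ⊇ Reach(K₁, p, T₁) (the reachset at exactly time T₁). Then the concatenation rtube₁ ⌢ timeShift(rtube₂, T₁), given by {(Xᵢ,[τᵢ₋₁,τᵢ])}ᵢ₌₁ʲ followed by {(Yᵢ,[T₁+σᵢ₋₁, T₁+σᵢ])}ᵢ₌₁ᵏ, is a (K₁, p, [0, T₁+T₂])-reachtube. -/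
/-- `(X, τ)` with `j` pieces is a `(K, p, [a,b])`-reachtube. -/
def IsReachtube {n : ℕ} {P : Type*} (ξ : (Fin n → ℝ) → P → ℝ → (Fin n → ℝ))
    (K : Set (Fin n → ℝ)) (p : P) (a b : ℝ)
    (j : ℕ) (X : ℕ → Set (Fin n → ℝ)) (τ : ℕ → ℝ) : Prop :=
  τ 0 = a ∧ τ j = b ∧ (∀ i < j, τ i < τ (i + 1)) ∧
    ∀ i < j, Reach ξ K p (τ i) (τ (i + 1)) ⊆ X i

section

variable {n : ℕ} {P : Type*} {ξ : (Fin n → ℝ) → P → ℝ → (Fin n → ℝ)} {p : P}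

theorem reach_shift_subset
    (hsemi : ∀ (x₀ : Fin n → ℝ) (p : P) (s t : ℝ), 0 ≤ s → 0 ≤ t →
      ξ x₀ p (s + t) = ξ (ξ x₀ p s) p t)
    {K₁ K₂ : Set (Fin n → ℝ)} {T a b : ℝ} (hT : 0 ≤ T) (ha : 0 ≤ a)
    (hK : Reach ξ K₁ p T T ⊆ K₂) :
    Reach ξ K₁ p (T + a) (T + b) ⊆ Reach ξ K₂ p a b := by
  rintro _ ⟨x₀, hx₀, t, ⟨hlo, hhi⟩, rfl⟩
  refine ⟨ξ x₀ p T, hK ⟨x₀, hx₀, T, Set.left_mem_Icc.2 le_rfl, rfl⟩, t - T,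
    ⟨by linarith, by linarith⟩, ?_⟩
  rw [← hsemi x₀ p T (t - T) hT (by linarith), add_sub_cancel]

namespace IsReachtube

variable {K : Set (Fin n → ℝ)} {a b : ℝ} {j : ℕ} {X : ℕ → Set (Fin n → ℝ)} {τ : ℕ → ℝ}

theorem start_le (h : IsReachtube ξ K p a b j X τ) {i : ℕ} (hi : i ≤ j) : a ≤ τ i := by
  induction i with
  | zero => exact h.1.ge
  | succ i ih => exact (ih (by omega)).trans (h.2.2.1 i (by omega)).le

theorem timeShift
    (hsemi : ∀ (x₀ : Fin n → ℝ) (p : P) (s t : ℝ), 0 ≤ s → 0 ≤ t →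
      ξ x₀ p (s + t) = ξ (ξ x₀ p s) p t)
    {K₀ : Set (Fin n → ℝ)} {T : ℝ} (hT : 0 ≤ T) (ha : 0 ≤ a)
    (hK : Reach ξ K₀ p T T ⊆ K) (h : IsReachtube ξ K p a b j X τ) :
    IsReachtube ξ K₀ p (T + a) (T + b) j X (fun i => T + τ i) := by
  obtain ⟨h0, hj, hmono, hreach⟩ := h
  refine ⟨congrArg (T + ·) h0, congrArg (T + ·) hj, fun i hi => by simpa using hmono i hi, fun i hi => ?_⟩
  have hτi : 0 ≤ τ i := ha.trans (start_le ⟨h0, hj, hmono, hreach⟩ hi.le)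
  exact (reach_shift_subset hsemi hT hτi hK).trans (hreach i hi)

theorem append {c : ℝ} {k : ℕ} {Y : ℕ → Set (Fin n → ℝ)} {σ : ℕ → ℝ}
    (h₁ : IsReachtube ξ K p a b j X τ) (h₂ : IsReachtube ξ K p b c k Y σ) :
    IsReachtube ξ K p a c (j + k)
      (fun i => if i < j then X i else Y (i - j))
      (fun i => if i ≤ j then τ i else σ (i - j)) := by
  obtain ⟨hτ0, hτj, hτmono, hτreach⟩ := h₁
  obtain ⟨hσ0, hσk, hσmono, hσreach⟩ := h₂
  have time_of_le : ∀ i, j ≤ i → (if i ≤ j then τ i else σ (i - j)) = σ (i - j) := by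
    intro i hi
    split_ifs with hij
    · obtain rfl : i = j := le_antisymm hij hi
      rw [Nat.sub_self, hτj, hσ0]
    · rfl
  refine ⟨by simp [hτ0], ?_, fun i hi => ?_, fun i hi => ?_⟩ <;> dsimp only
  · rw [time_of_le _ (Nat.le_add_right j k), Nat.add_sub_cancel_left, hσk]
  · rcases lt_or_ge i j with hij | hij
    · simpa [hij.le, Nat.succ_le_of_lt hij] using hτmono i hij
    · rw [time_of_le i hij, time_of_le (i + 1) (by omega), Nat.sub_add_comm hij]
      exact hσmono _ (by omega)
  · rcases lt_or_ge i j with hij | hij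
    · simpa [hij, hij.le, Nat.succ_le_of_lt hij] using hτreach i hij
    · rw [time_of_le i hij, time_of_le (i + 1) (by omega), Nat.sub_add_comm hij,
        if_neg hij.not_gt]
      exact hσreach _ (by omega)

end IsReachtube

end

theorem stmt_11_general {n : ℕ} {P : Type*}
    (ξ : (Fin n → ℝ) → P → ℝ → (Fin n → ℝ))
    (hsemi : ∀ (x₀ : Fin n → ℝ) (p : P) (s t : ℝ), 0 ≤ s → 0 ≤ t →
      ξ x₀ p (s + t) = ξ (ξ x₀ p s) p t)
    (K₁ K₂ : Set (Fin n → ℝ)) (p : P) (T₁ T₂ : ℝ) (hT₁ : 0 ≤ T₁)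
    (j k : ℕ) (X Y : ℕ → Set (Fin n → ℝ)) (τ σ : ℕ → ℝ)
    (htube₁ : IsReachtube ξ K₁ p 0 T₁ j X τ)
    (htube₂ : IsReachtube ξ K₂ p 0 T₂ k Y σ)
    (hK₂ : Reach ξ K₁ p T₁ T₁ ⊆ K₂) :
    IsReachtube ξ K₁ p 0 (T₁ + T₂) (j + k)
      (fun i => if i < j then X i else Y (i - j))
      (fun i => if i ≤ j then τ i else T₁ + σ (i - j)) := by
  have hshifted := htube₂.timeShift hsemi hT₁ le_rfl hK₂
  rw [add_zero] at hshifted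
  exact htube₁.append hshifted

/-- Concatenation of reachtubes. If `rtube₁` is a `(K₁,p,[0,T₁])`-reachtube,
`rtube₂` a `(K₂,p,[0,T₂])`-reachtube, the flow satisfies the semigroup property, and
`K₂ ⊇ Reach(K₁,p,T₁)` (the reachset at exactly time `T₁`), then
`rtube₁ ⌢ timeShift(rtube₂, T₁)` is a `(K₁, p, [0, T₁+T₂])`-reachtube. -/
theorem stmt_11 {n : ℕ} {P : Type*}
    (ξ : (Fin n → ℝ) → P → ℝ → (Fin n → ℝ))
    (hsemi : ∀ (x₀ : Fin n → ℝ) (p : P) (s t : ℝ), 0 ≤ s → 0 ≤ t →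
      ξ x₀ p (s + t) = ξ (ξ x₀ p s) p t)
    (K₁ K₂ : Set (Fin n → ℝ)) (p : P) (T₁ T₂ : ℝ) (hT₁ : 0 ≤ T₁) (hT₂ : 0 ≤ T₂)
    (j k : ℕ) (X Y : ℕ → Set (Fin n → ℝ)) (τ σ : ℕ → ℝ)
    (htube₁ : IsReachtube ξ K₁ p 0 T₁ j X τ)
    (htube₂ : IsReachtube ξ K₂ p 0 T₂ k Y σ)
    (hK₂ : Reach ξ K₁ p T₁ T₁ ⊆ K₂) :
    IsReachtube ξ K₁ p 0 (T₁ + T₂) (j + k)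
      (fun i => if i < j then X i else Y (i - j))
      (fun i => if i ≤ j then τ i else T₁ + σ (i - j)) :=
  stmt_11_general ξ hsemi K₁ K₂ p T₁ T₂ hT₁ j k X Y τ σ htube₁ htube₂ hK₂
end
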